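/- arXiv:2105.10861 — 2 statements merged into one kernel-verified Lean document; each statement's English description precedes it below -/
import Mathlib

section
/- Let m ≥ 1 and let T₁ and T₂ be discourse trees over m EDUs. If S_edu(T₁) = S_edu(T₂), then T₁ = T₂. In other words, the map sending a discourse tree to its splitting-decision set is injective, so predicting the set of splitting decisions is equivalent to predicting the discourse tree. -/
/-- A discourse tree over the EDU interval `(i, j)`: a full binary tree whose
nodes are labeled by intervals, leaves are labeled `(i, i+1)`, and every
internal node labeled `(i, j)` has two children labeled `(i, k)` and `(k, j)`
for some `i < k < j`.  A discourse tree over `m` EDUs is a `DTree 0 m`. -/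
inductive DTree : ℕ → ℕ → Type
  | leaf (i : ℕ) : DTree i (i + 1)
  | node {i k j : ℕ} : DTree i k → DTree k j → DTree i j

/-- The splitting-decision set `S_edu(T)`: the set of triples `(i, k, j)` such
that some internal node of `T` labeled `(i, j)` has children labeled `(i, k)`
and `(k, j)`. -/
def DTree.splits : {i j : ℕ} → DTree i j → Finset (ℕ × ℕ × ℕ)
  | _, _, DTree.leaf _ => ∅
  | _, _, @DTree.node i k j l r => insert (i, k, j) (l.splits ∪ r.splits)

/-!
A tree is recovered from its splits by induction. The root split `(i, k, j)` is the only
split spanning all of `(i, j)`, so `k` is determined; the splits of the left subtree are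
then exactly those ending at or before `k`, and those of the right subtree exactly those
starting at or after `k`.
-/

namespace DTree

variable {i k j : ℕ}

theorem lt : ∀ {i j : ℕ}, DTree i j → i < j
  | _, _, leaf _ => Nat.lt_succ_self _
  | _, _, node l r => l.lt.trans r.lt

theorem bounds_of_mem_splits {a b c : ℕ} (T : DTree i j) (h : (a, b, c) ∈ T.splits) :
    i ≤ a ∧ a < b ∧ b < c ∧ c ≤ j := by
  induction T with
  | leaf => simp [splits] at h
  | node l r ihl ihr =>
    have := l.lt
    have := r.lt
    simp only [splits, Finset.mem_insert, Finset.mem_union, Prod.mk.injEq] at h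
    rcases h with ⟨rfl, rfl, rfl⟩ | hl | hr
    · omega
    · have := ihl hl; omega
    · have := ihr hr; omega

theorem mem_splits_node (l : DTree i k) (r : DTree k j) : (i, k, j) ∈ (node l r).splits :=
  Finset.mem_insert_self _ _

theorem eq_of_mem_splits_node {k' : ℕ} {l : DTree i k} {r : DTree k j}
    (h : (i, k', j) ∈ (node l r).splits) : k' = k := by
  have := l.lt
  have := r.lt
  simp only [splits, Finset.mem_insert, Finset.mem_union, Prod.mk.injEq] at h
  rcases h with ⟨-, rfl, -⟩ | hl | hr
  · rfl
  · have := l.bounds_of_mem_splits hl; omega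
  · have := r.bounds_of_mem_splits hr; omega

theorem filter_splits_node_left (l : DTree i k) (r : DTree k j) :
    (node l r).splits.filter (fun t => t.2.2 ≤ k) = l.splits := by
  have := r.lt
  rw [splits, Finset.filter_insert, if_neg (by dsimp only; omega), Finset.filter_union,
    Finset.filter_true_of_mem, Finset.filter_false_of_mem, Finset.union_empty]
  · rintro ⟨a, b, c⟩ h
    have := r.bounds_of_mem_splits h; dsimp only; omega
  · rintro ⟨a, b, c⟩ h
    exact (l.bounds_of_mem_splits h).2.2.2

theorem filter_splits_node_right (l : DTree i k) (r : DTree k j) :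
    (node l r).splits.filter (fun t => k ≤ t.1) = r.splits := by
  have := l.lt
  rw [splits, Finset.filter_insert, if_neg (by dsimp only; omega), Finset.filter_union,
    Finset.filter_false_of_mem, Finset.filter_true_of_mem, Finset.empty_union]
  · rintro ⟨a, b, c⟩ h
    exact (r.bounds_of_mem_splits h).1
  · rintro ⟨a, b, c⟩ h
    have := l.bounds_of_mem_splits h; dsimp only; omega

theorem splits_injective : Function.Injective (splits : DTree i j → Finset (ℕ × ℕ × ℕ)) := by
  intro T₁
  induction T₁ with
  | leaf =>
    rintro (_ | ⟨l, r⟩) h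
    · rfl
    · exact absurd h.symm (Finset.insert_ne_empty _ _)
  | node l r ihl ihr =>
    rintro (_ | ⟨l₂, r₂⟩) h
    · exact absurd h (Finset.insert_ne_empty _ _)
    · obtain rfl := eq_of_mem_splits_node (h ▸ mem_splits_node l r)
      have hl : l.splits = l₂.splits := by
        rw [← filter_splits_node_left l r, h, filter_splits_node_left]
      have hr : r.splits = r₂.splits := by
        rw [← filter_splits_node_right l r, h, filter_splits_node_right]
      rw [ihl hl, ihr hr]

end DTree

/-- If two discourse trees over `m` EDUs (`m ≥ 1`) have the same
splitting-decision set, they are equal: the map `T ↦ S_edu(T)` is injective. -/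
theorem splits_injective (m : ℕ) (T₁ T₂ : DTree 0 m)
    (h : T₁.splits = T₂.splits) : T₁ = T₂ :=
  DTree.splits_injective h
end

section
/- Let n ≥ 1. If T₁ (with EDU segmentation B₁) and T₂ (with EDU segmentation B₂) are binarized discourse trees over the span (0,n) and S(T₁) = S(T₂), then B₁ = B₂ and T₁ = T₂. In particular, the EDU segmentation is recoverable from the end-to-end splitting-decision set as the set of spans (i,j) with (i,j,j) ∈ S(T), so the end-to-end splitting-decision set determines both the segmentation and the tree. -/
/-- A binarized discourse tree over the token-boundary span `(i, j)`:
a full binary tree whose nodes are labeled by intervals, whose leaves (the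
EDUs) are labeled by arbitrary intervals `(i, j)` with `i < j`, and every
internal node labeled `(i, j)` has two children labeled `(i, k)` and `(k, j)`
for some `i < k < j`.  A binarized discourse tree over a document of `n`
tokens is an `ETree 0 n`; its EDU segmentation `B` is determined by its
leaves, which, read left to right, are automatically consecutive spans
`(b₀,b₁), (b₁,b₂), …, (b_{m−1},b_m)` with `b₀ = 0` and `b_m = n`. -/
inductive ETree : ℕ → ℕ → Type
  | leaf {i j : ℕ} (h : i < j) : ETree i j
  | node {i k j : ℕ} : ETree i k → ETree k j → ETree i j

/-- The end-to-end splitting-decision set `S(T)`: triples `(i, k, j)` for each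
internal node labeled `(i, j)` with children `(i, k)` and `(k, j)`, together
with the EDU-marking decisions `(i, j, j)` for each leaf `(i, j)`. -/
def ETree.splits : {i j : ℕ} → ETree i j → Finset (ℕ × ℕ × ℕ)
  | _, _, @ETree.leaf i j _ => {(i, j, j)}
  | _, _, @ETree.node i k j l r => insert (i, k, j) (l.splits ∪ r.splits)

/-- The EDU segmentation of the tree: the list of its leaf spans, read left to
right. -/
def ETree.edus : {i j : ℕ} → ETree i j → List (ℕ × ℕ)
  | _, _, @ETree.leaf i j _ => [(i, j)]
  | _, _, ETree.node l r => l.edus ++ r.edus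

/-!
The root decision `(i, k, j)` of a tree over `(i, j)` is the only decision in `S(T)` spanning
all of `(i, j)`, so `S(T)` determines the root split. Every decision of the left subtree ends
at or before `k` and every decision of the right subtree starts at or after `k`, so `S(T)` also
splits into the decision sets of the two subtrees, and induction finishes the argument.
The leaves are exactly the decisions of the form `(i, j, j)`, since internal decisions have
`k < j`.
-/

namespace ETree

/-- A leaf's decision is `(i, j, j)`, so its split point is `j`. -/
def rootSplit : {i j : ℕ} → ETree i j → ℕ
  | _, _, @leaf _ j _ => j
  | _, _, @node _ k _ _ _ => k

theorem lt : ∀ {i j : ℕ}, ETree i j → i < j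
  | _, _, leaf h => h
  | _, _, node l r => l.lt.trans r.lt

theorem bounds_of_mem_splits {i j : ℕ} (T : ETree i j) {t : ℕ × ℕ × ℕ} (ht : t ∈ T.splits) :
    i ≤ t.1 ∧ t.1 < t.2.1 ∧ t.2.1 ≤ t.2.2 ∧ t.2.2 ≤ j := by
  induction T with
  | leaf h =>
    obtain rfl := Finset.mem_singleton.mp ht
    exact ⟨le_rfl, h, le_rfl, le_rfl⟩
  | node l r ihl ihr =>
    simp only [splits, Finset.mem_insert, Finset.mem_union] at ht
    have := l.lt
    have := r.lt
    rcases ht with rfl | ht | ht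
    · exact ⟨le_rfl, l.lt, r.lt.le, le_rfl⟩
    · have := ihl ht
      omega
    · have := ihr ht
      omega

theorem mem_splits_span_iff {i j : ℕ} (T : ETree i j) {k : ℕ} :
    (i, k, j) ∈ T.splits ↔ k = T.rootSplit := by
  cases T with
  | leaf h => simp [splits, rootSplit]
  | node l r =>
    simp only [splits, rootSplit, Finset.mem_insert, Finset.mem_union, Prod.mk.injEq,
      true_and, and_true, or_iff_left_iff_imp]
    rintro (ht | ht)
    · exact absurd (l.bounds_of_mem_splits ht).2.2.2 r.lt.not_ge
    · exact absurd (r.bounds_of_mem_splits ht).1 l.lt.not_ge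

theorem rootSplit_eq_of_splits_eq {i j : ℕ} {T₁ T₂ : ETree i j}
    (h : T₁.splits = T₂.splits) : T₁.rootSplit = T₂.rootSplit :=
  T₂.mem_splits_span_iff.mp (h ▸ T₁.mem_splits_span_iff.mpr rfl)

theorem filter_splits_node_left {i k j : ℕ} (l : ETree i k) (r : ETree k j) :
    (node l r).splits.filter (fun t => t.2.2 ≤ k) = l.splits := by
  ext t
  simp only [splits, Finset.mem_filter, Finset.mem_insert, Finset.mem_union]
  constructor
  · rintro ⟨rfl | ht | ht, hk⟩
    · exact absurd hk r.lt.not_ge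
    · exact ht
    · have := r.bounds_of_mem_splits ht
      omega
  · intro ht
    exact ⟨Or.inr (Or.inl ht), (l.bounds_of_mem_splits ht).2.2.2⟩

theorem filter_splits_node_right {i k j : ℕ} (l : ETree i k) (r : ETree k j) :
    (node l r).splits.filter (fun t => k ≤ t.1) = r.splits := by
  ext t
  simp only [splits, Finset.mem_filter, Finset.mem_insert, Finset.mem_union]
  constructor
  · rintro ⟨rfl | ht | ht, hk⟩
    · exact absurd hk l.lt.not_ge
    · have := l.bounds_of_mem_splits ht
      omega
    · exact ht
  · intro ht
    exact ⟨Or.inr (Or.inr ht), (r.bounds_of_mem_splits ht).1⟩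

theorem splits_injective {i j : ℕ} : Function.Injective (splits : ETree i j → _) := by
  intro T₁ T₂ h
  induction T₁ with
  | leaf =>
    cases T₂ with
    | leaf => rfl
    | node _ r => exact absurd (rootSplit_eq_of_splits_eq h) r.lt.ne'
  | @node _ k _ l₁ r₁ ihl ihr =>
    cases T₂ with
    | leaf => exact absurd (rootSplit_eq_of_splits_eq h) r₁.lt.ne
    | @node _ k₂ _ l₂ r₂ =>
      have hk : k = k₂ := rootSplit_eq_of_splits_eq h
      subst hk
      have hl : l₁.splits = l₂.splits := by
        rw [← filter_splits_node_left l₁ r₁, h, filter_splits_node_left]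
      have hr : r₁.splits = r₂.splits := by
        rw [← filter_splits_node_right l₁ r₁, h, filter_splits_node_right]
      rw [ihl hl, ihr hr]

theorem mem_edus_iff {a b : ℕ} (T : ETree a b) {i j : ℕ} :
    (i, j) ∈ T.edus ↔ (i, j, j) ∈ T.splits := by
  induction T with
  | leaf => simp [edus, splits]
  | node l r ihl ihr =>
    simp only [edus, splits, List.mem_append, ihl, ihr, Finset.mem_insert, Finset.mem_union,
      Prod.mk.injEq]
    refine ⟨Or.inr, ?_⟩
    rintro (⟨rfl, rfl, rfl⟩ | ht)
    · exact absurd r.lt (lt_irrefl _)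
    · exact ht

end ETree

theorem end_to_end_splits_determine_tree_general (n : ℕ)
    (T₁ T₂ : ETree 0 n) (h : T₁.splits = T₂.splits) :
    T₁.edus = T₂.edus ∧ T₁ = T₂ ∧
      ∀ i j : ℕ, (i, j) ∈ T₁.edus ↔ (i, j, j) ∈ T₁.splits := by
  obtain rfl := ETree.splits_injective h
  exact ⟨rfl, rfl, fun _ _ => T₁.mem_edus_iff⟩

/-- If two binarized discourse trees over `(0, n)` (`n ≥ 1`) have the same
end-to-end splitting-decision set, then they have the same EDU segmentation
and are equal.  In particular, the segmentation is recoverable from `S(T)` as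
the set of spans `(i, j)` with `(i, j, j) ∈ S(T)`. -/
theorem end_to_end_splits_determine_tree (n : ℕ) (hn : 1 ≤ n)
    (T₁ T₂ : ETree 0 n) (h : T₁.splits = T₂.splits) :
    T₁.edus = T₂.edus ∧ T₁ = T₂ ∧
      ∀ i j : ℕ, (i, j) ∈ T₁.edus ↔ (i, j, j) ∈ T₁.splits :=
  end_to_end_splits_determine_tree_general n T₁ T₂ h
end
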